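/- (Step of Lemma 3: the reduced adjoint symmetry of Lax-pair solutions.) Fix a positive integer N. Let D = diag(d₁, d₂) be a 2N×2N block-diagonal complex matrix (d₁, d₂ ∈ M_N(ℂ)) with D† = D and D² = I_{2N}. Let Q, P, 𝓕 : ℤ × ℝ → M_N(ℂ) take diagonal-matrix values, set F(n,t) = diag(𝓕(n,t), 𝓕(n,t)) and U(n,t) = [[0, Q(n,t)],[P(n,t), 0]], and assume the reduction relations U(n,t) = −D U(n,t)† D and F(n,t) = D F(n,t)† D hold for all n, t. Let V(n,t,z) = i ( U(n−1,t) Z − U(n,t) Z^{−1} − (1/2)(U(n,t)U(n−1,t) + U(n−1,t)U(n,t)) ) Σ₃. Suppose μ : ℤ × ℝ × (ℂ∖{0}) → M_{2N}(ℂ) is differentiable in t and satisfies F(n,t) μ(n+1,t,z) = Z μ(n,t,z) Z^{−1} + U(n,t) μ(n,t,z) Z^{−1} and ∂_t μ(n,t,z) = i ω(z)(Σ₃ μ − μ Σ₃) + V(n,t,z) μ(n,t,z) for all n, t and all z ≠ 0. Then Φ(n,t,z) := D μ(n,t, 1/conj(z))† D satisfies Φ(n+1,t,z) F(n,t) = Z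 Φ(n,t,z) Z^{−1} − Z Φ(n,t,z) U(n,t) and ∂_t Φ(n,t,z) = i ω(z)(Σ₃ Φ − Φ Σ₃) − Φ(n,t,z) V(n,t,z), for all n, t and z ≠ 0. -/

import Mathlib

/-
Apply the twisted adjoint `A ↦ D A† D` to both Lax equations at `1/conj z`. Since `D² = 1` it
reverses products; the reductions make it fix `F` and negate `U`; as `D` is block diagonal it
commutes with `Z` and `Σ₃`, so it sends `Z(1/conj z)` to `Z(z)⁻¹` and fixes `Σ₃`. Moving `Σ₃`
through `V` (it anticommutes with `U` and commutes with `Z`) shows that it sends `V(1/conj z)` to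
`-V(z)`, and `conj (i ω(1/conj z)) = -i ω(z)`. Finally, the derivative commutes with the
entrywise conjugation.
-/

noncomputable section

open Matrix

variable {N : ℕ}

/-- `Z = diag(z I_N, z⁻¹ I_N)`. -/
def Zb (N : ℕ) (z : ℂ) : Matrix (Fin N ⊕ Fin N) (Fin N ⊕ Fin N) ℂ :=
  Matrix.fromBlocks (z • 1) 0 0 (z⁻¹ • 1)

/-- `Σ₃ = diag(I_N, −I_N)`. -/
def Sigma3b (N : ℕ) : Matrix (Fin N ⊕ Fin N) (Fin N ⊕ Fin N) ℂ :=
  Matrix.fromBlocks 1 0 0 (-1)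

/-- `ω(z) = (1/2)(z − z⁻¹)²`. -/
def omega (z : ℂ) : ℂ := (1 / 2 : ℂ) * (z - z⁻¹) ^ 2

/-- `F(n,t) = diag(𝓕(n,t), 𝓕(n,t))`. -/
def Fblk (Fd : ℤ → ℝ → Matrix (Fin N) (Fin N) ℂ) (n : ℤ) (t : ℝ) :
    Matrix (Fin N ⊕ Fin N) (Fin N ⊕ Fin N) ℂ :=
  Matrix.fromBlocks (Fd n t) 0 0 (Fd n t)

/-- `U(n,t) = [[0, Q(n,t)],[P(n,t), 0]]`. -/
def Ublk (Q P : ℤ → ℝ → Matrix (Fin N) (Fin N) ℂ) (n : ℤ) (t : ℝ) :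
    Matrix (Fin N ⊕ Fin N) (Fin N ⊕ Fin N) ℂ :=
  Matrix.fromBlocks 0 (Q n t) (P n t) 0

/-- `V(n,t,z) = i (U(n−1,t)Z − U(n,t)Z⁻¹ − (1/2)(U(n,t)U(n−1,t) + U(n−1,t)U(n,t))) Σ₃`. -/
def Vblk (Q P : ℤ → ℝ → Matrix (Fin N) (Fin N) ℂ) (n : ℤ) (t : ℝ) (z : ℂ) :
    Matrix (Fin N ⊕ Fin N) (Fin N ⊕ Fin N) ℂ :=
  Complex.I • ((Ublk Q P (n - 1) t * Zb N z - Ublk Q P n t * (Zb N z)⁻¹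
    - (1 / 2 : ℂ) • (Ublk Q P n t * Ublk Q P (n - 1) t
      + Ublk Q P (n - 1) t * Ublk Q P n t)) * Sigma3b N)

section TwistedConjTranspose

variable {ι α : Type*} [Fintype ι] [CommRing α] [StarRing α]
  (D : Matrix ι ι α)

def twistedConjTranspose (A : Matrix ι ι α) : Matrix ι ι α := D * Aᴴ * D

variable {D}

lemma twistedConjTranspose_mul [DecidableEq ι] (hD : D * D = 1) (A B : Matrix ι ι α) :
    twistedConjTranspose D (A * B) =
      twistedConjTranspose D B * twistedConjTranspose D A := by
  simp only [twistedConjTranspose, conjTranspose_mul, Matrix.mul_assoc]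
  rw [← Matrix.mul_assoc D D, hD, Matrix.one_mul]

variable (D)

lemma twistedConjTranspose_add (A B : Matrix ι ι α) :
    twistedConjTranspose D (A + B) =
      twistedConjTranspose D A + twistedConjTranspose D B := by
  simp only [twistedConjTranspose, conjTranspose_add, Matrix.mul_add, Matrix.add_mul]

lemma twistedConjTranspose_sub (A B : Matrix ι ι α) :
    twistedConjTranspose D (A - B) =
      twistedConjTranspose D A - twistedConjTranspose D B := by
  simp only [twistedConjTranspose, conjTranspose_sub, Matrix.mul_sub, Matrix.sub_mul]

lemma twistedConjTranspose_smul (c : α) (A : Matrix ι ι α) :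
    twistedConjTranspose D (c • A) = star c • twistedConjTranspose D A := by
  simp only [twistedConjTranspose, conjTranspose_smul, Matrix.mul_smul, Matrix.smul_mul]

variable {D}

lemma twistedConjTranspose_eq_conjTranspose [DecidableEq ι] (hD : D * D = 1) {A : Matrix ι ι α}
    (h : Commute D Aᴴ) : twistedConjTranspose D A = Aᴴ := by
  rw [twistedConjTranspose, h.eq, Matrix.mul_assoc, hD, Matrix.mul_one]

lemma twistedConjTranspose_lax_time [DecidableEq ι] (hD : D * D = 1) {S V V' M : Matrix ι ι α}
    {c c' : α} (hS : twistedConjTranspose D S = S) (hV : twistedConjTranspose D V = -V')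
    (hc : star c = -c') :
    twistedConjTranspose D (c • (S * M - M * S) + V * M) =
      c' • (S * twistedConjTranspose D M - twistedConjTranspose D M * S) -
        twistedConjTranspose D M * V' := by
  rw [twistedConjTranspose_add, twistedConjTranspose_smul, twistedConjTranspose_sub,
    twistedConjTranspose_mul hD, twistedConjTranspose_mul hD, twistedConjTranspose_mul hD, hS, hV,
    hc, neg_smul, ← smul_neg, neg_sub, mul_neg, ← sub_eq_add_neg]

end TwistedConjTranspose

lemma hasDerivAt_twistedConjTranspose_apply {ι : Type*} [Fintype ι] (D : Matrix ι ι ℂ)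
    {A : ℝ → Matrix ι ι ℂ} {A' : Matrix ι ι ℂ} {t : ℝ}
    (h : ∀ i j, HasDerivAt (fun s => A s i j) (A' i j) t) (i j : ι) :
    HasDerivAt (fun s => twistedConjTranspose D (A s) i j)
      (twistedConjTranspose D A' i j) t := by
  simp only [twistedConjTranspose, mul_apply, conjTranspose_apply]
  exact HasDerivAt.fun_sum fun l _ =>
    (HasDerivAt.fun_sum fun k _ => (h l k).star.const_mul _).mul_const _

lemma Zb_conjTranspose (z : ℂ) : (Zb N z)ᴴ = Zb N (starRingEnd ℂ z) := by
  simp [Zb, fromBlocks_conjTranspose]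

lemma inv_Zb {z : ℂ} (hz : z ≠ 0) : (Zb N z)⁻¹ = Zb N z⁻¹ := by
  refine inv_eq_right_inv ?_
  simp [Zb, fromBlocks_multiply, smul_smul, mul_inv_cancel₀ hz, inv_mul_cancel₀ hz,
    ← fromBlocks_one]

lemma Sigma3b_conjTranspose : (Sigma3b N)ᴴ = Sigma3b N := by
  simp [Sigma3b, fromBlocks_conjTranspose]

lemma commute_Sigma3b_Zb (z : ℂ) : Commute (Sigma3b N) (Zb N z) := by
  simp [Commute, SemiconjBy, Sigma3b, Zb, fromBlocks_multiply]

lemma commute_fromBlocks_Zb (d₁ d₂ : Matrix (Fin N) (Fin N) ℂ) (z : ℂ) :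
    Commute (fromBlocks d₁ 0 0 d₂) (Zb N z) := by
  simp [Commute, SemiconjBy, Zb, fromBlocks_multiply]

lemma commute_fromBlocks_Sigma3b (d₁ d₂ : Matrix (Fin N) (Fin N) ℂ) :
    Commute (fromBlocks d₁ 0 0 d₂) (Sigma3b N) := by
  simp [Commute, SemiconjBy, Sigma3b, fromBlocks_multiply]

lemma Zb_mul_Ublk (Q P : ℤ → ℝ → Matrix (Fin N) (Fin N) ℂ) (n : ℤ) (t : ℝ) (z : ℂ) :
    Zb N z * Ublk Q P n t = Ublk Q P n t * Zb N z⁻¹ := by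
  simp [Zb, Ublk, fromBlocks_multiply]

lemma Sigma3b_mul_Ublk (Q P : ℤ → ℝ → Matrix (Fin N) (Fin N) ℂ) (n : ℤ) (t : ℝ) :
    Sigma3b N * Ublk Q P n t = -(Ublk Q P n t * Sigma3b N) := by
  simp [Sigma3b, Ublk, fromBlocks_multiply, fromBlocks_neg]

lemma star_I_mul_omega_inv_conj (z : ℂ) :
    star (Complex.I * omega (starRingEnd ℂ z)⁻¹) = -(Complex.I * omega z) := by
  simp only [omega, star_mul', Complex.star_def, Complex.conj_I, map_pow,
    map_sub, map_inv₀, map_div₀, _root_.map_one, map_ofNat, Complex.conj_conj, inv_inv]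
  ring

section ReducedAdjoint

variable {D : Matrix (Fin N ⊕ Fin N) (Fin N ⊕ Fin N) ℂ}

lemma twistedConjTranspose_Zb (hD : D * D = 1) (hDZ : ∀ z, Commute D (Zb N z)) (z : ℂ) :
    twistedConjTranspose D (Zb N z) = Zb N (starRingEnd ℂ z) := by
  rw [twistedConjTranspose_eq_conjTranspose hD (Zb_conjTranspose z ▸ hDZ _), Zb_conjTranspose]

lemma twistedConjTranspose_Sigma3b (hD : D * D = 1) (hDS : Commute D (Sigma3b N)) :
    twistedConjTranspose D (Sigma3b N) = Sigma3b N := by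
  rw [twistedConjTranspose_eq_conjTranspose hD (by rwa [Sigma3b_conjTranspose]),
    Sigma3b_conjTranspose]

lemma twistedConjTranspose_Vblk (hD : D * D = 1) (hDZ : ∀ z, Commute D (Zb N z))
    (hDS : Commute D (Sigma3b N)) {Q P : ℤ → ℝ → Matrix (Fin N) (Fin N) ℂ} {t : ℝ}
    (hU : ∀ m, twistedConjTranspose D (Ublk Q P m t) = -Ublk Q P m t) (n : ℤ) {z : ℂ}
    (hz : z ≠ 0) :
    twistedConjTranspose D (Vblk Q P n t (starRingEnd ℂ z)⁻¹) = -Vblk Q P n t z := by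
  have hz' : (starRingEnd ℂ z)⁻¹ ≠ 0 := by simpa using hz
  simp only [Vblk, inv_Zb hz, inv_Zb hz', twistedConjTranspose_smul, twistedConjTranspose_mul hD,
    twistedConjTranspose_sub, twistedConjTranspose_add, twistedConjTranspose_Sigma3b hD hDS,
    twistedConjTranspose_Zb hD hDZ, hU, Complex.star_def, Complex.conj_I, map_inv₀,
    Complex.conj_conj, inv_inv, map_div₀, map_one, map_ofNat, neg_mul, mul_neg, neg_neg,
    Zb_mul_Ublk]
  rw [neg_smul, neg_inj]
  congr 1
  have hSUZ : ∀ m u,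
      Sigma3b N * (Ublk Q P m t * Zb N u) = -(Ublk Q P m t * Zb N u * Sigma3b N) := by
    intro m u
    rw [← Matrix.mul_assoc, Sigma3b_mul_Ublk, neg_mul, Matrix.mul_assoc, (commute_Sigma3b_Zb u).eq,
      ← Matrix.mul_assoc]
  have hSUU : ∀ m k, Sigma3b N * (Ublk Q P m t * Ublk Q P k t) =
      Ublk Q P m t * Ublk Q P k t * Sigma3b N := by
    intro m k
    rw [← Matrix.mul_assoc, Sigma3b_mul_Ublk, neg_mul, Matrix.mul_assoc, Sigma3b_mul_Ublk, mul_neg,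
      neg_neg, ← Matrix.mul_assoc]
  simp only [Matrix.mul_sub, Matrix.mul_add, Matrix.mul_neg, Matrix.mul_smul, hSUZ, hSUU,
    Matrix.sub_mul, Matrix.add_mul, Matrix.smul_mul, neg_neg]
  rw [add_comm (Ublk Q P (n - 1) t * _ * _)]

lemma twistedConjTranspose_lax_step (hD : D * D = 1) (hDZ : ∀ z, Commute D (Zb N z))
    {F U M M' : Matrix (Fin N ⊕ Fin N) (Fin N ⊕ Fin N) ℂ} (hF : twistedConjTranspose D F = F)
    (hU : twistedConjTranspose D U = -U) {z : ℂ} (hz : z ≠ 0)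
    (h : F * M' = Zb N (starRingEnd ℂ z)⁻¹ * M * (Zb N (starRingEnd ℂ z)⁻¹)⁻¹
      + U * M * (Zb N (starRingEnd ℂ z)⁻¹)⁻¹) :
    twistedConjTranspose D M' * F =
      Zb N z * twistedConjTranspose D M * (Zb N z)⁻¹ - Zb N z * twistedConjTranspose D M * U := by
  have hz' : (starRingEnd ℂ z)⁻¹ ≠ 0 := by simpa using hz
  calc twistedConjTranspose D M' * F = twistedConjTranspose D (F * M') := by
        rw [twistedConjTranspose_mul hD, hF]
    _ = _ := by
      simp only [h, inv_Zb hz, inv_Zb hz', twistedConjTranspose_add, twistedConjTranspose_mul hD,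
        twistedConjTranspose_Zb hD hDZ, hU, map_inv₀, Complex.conj_conj, inv_inv, mul_neg,
        Matrix.mul_assoc, sub_eq_add_neg]

end ReducedAdjoint

theorem stmt16_general (N : ℕ)
    (d₁ d₂ : Matrix (Fin N) (Fin N) ℂ)
    (D : Matrix (Fin N ⊕ Fin N) (Fin N ⊕ Fin N) ℂ)
    (hD : D = Matrix.fromBlocks d₁ 0 0 d₂)
    (hD2 : D * D = 1)
    (Q P Fd : ℤ → ℝ → Matrix (Fin N) (Fin N) ℂ)
    (hUred : ∀ n t, Ublk Q P n t = -(D * (Ublk Q P n t)ᴴ * D))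
    (hFred : ∀ n t, Fblk Fd n t = D * (Fblk Fd n t)ᴴ * D)
    (μ : ℤ → ℝ → ℂ → Matrix (Fin N ⊕ Fin N) (Fin N ⊕ Fin N) ℂ)
    (hS : ∀ (n : ℤ) (t : ℝ) (z : ℂ), z ≠ 0 →
      Fblk Fd n t * μ (n + 1) t z =
        Zb N z * μ n t z * (Zb N z)⁻¹ + Ublk Q P n t * μ n t z * (Zb N z)⁻¹)
    (hT : ∀ (n : ℤ) (z : ℂ), z ≠ 0 → ∀ (t : ℝ) (i j : Fin N ⊕ Fin N),
      HasDerivAt (fun s => μ n s z i j)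
        (((Complex.I * omega z) • (Sigma3b N * μ n t z - μ n t z * Sigma3b N)
          + Vblk Q P n t z * μ n t z) i j) t)
    (Φ : ℤ → ℝ → ℂ → Matrix (Fin N ⊕ Fin N) (Fin N ⊕ Fin N) ℂ)
    (hΦ : ∀ n t z, Φ n t z = D * (μ n t ((starRingEnd ℂ z)⁻¹))ᴴ * D) :
    ∀ (n : ℤ) (t : ℝ) (z : ℂ), z ≠ 0 →
      (Φ (n + 1) t z * Fblk Fd n t =
        Zb N z * Φ n t z * (Zb N z)⁻¹ - Zb N z * Φ n t z * Ublk Q P n t) ∧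
      (∀ i j : Fin N ⊕ Fin N,
        HasDerivAt (fun s => Φ n s z i j)
          (((Complex.I * omega z) • (Sigma3b N * Φ n t z - Φ n t z * Sigma3b N)
            - Φ n t z * Vblk Q P n t z) i j) t) := by
  intro n t z hz
  have hw : (starRingEnd ℂ z)⁻¹ ≠ 0 := by simpa using hz
  have hDZ : ∀ u, Commute D (Zb N u) := fun u => hD ▸ commute_fromBlocks_Zb d₁ d₂ u
  have hDS : Commute D (Sigma3b N) := hD ▸ commute_fromBlocks_Sigma3b d₁ d₂
  have hU : ∀ m, twistedConjTranspose D (Ublk Q P m t) = -Ublk Q P m t := fun m =>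
    neg_eq_iff_eq_neg.mp (hUred m t).symm
  have hΦ' : ∀ m s, Φ m s z = twistedConjTranspose D (μ m s (starRingEnd ℂ z)⁻¹) :=
    fun m s => hΦ m s z
  refine ⟨?_, fun i j => ?_⟩
  · rw [hΦ', hΦ']
    exact twistedConjTranspose_lax_step hD2 hDZ (hFred n t).symm (hU n) hz (hS n t _ hw)
  · simp only [hΦ']
    rw [← twistedConjTranspose_lax_time hD2 (twistedConjTranspose_Sigma3b hD2 hDS)
      (twistedConjTranspose_Vblk hD2 hDZ hDS hU n hz) (star_I_mul_omega_inv_conj z)]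
    exact hasDerivAt_twistedConjTranspose_apply D (hT n _ hw t) i j

/-- Step of Lemma 3: under the reduction `U = −D U† D`, `F = D F† D` (with `D`
block-diagonal, Hermitian and an involution), the function
`Φ(n,t,z) = D μ(n,t,1/conj z)† D` solves the adjoint Lax equations. -/
theorem stmt16 (N : ℕ) (hN : 0 < N)
    (d₁ d₂ : Matrix (Fin N) (Fin N) ℂ)
    (D : Matrix (Fin N ⊕ Fin N) (Fin N ⊕ Fin N) ℂ)
    (hD : D = Matrix.fromBlocks d₁ 0 0 d₂)
    (hDH : Dᴴ = D) (hD2 : D * D = 1)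
    (Q P Fd : ℤ → ℝ → Matrix (Fin N) (Fin N) ℂ)
    (hQ : ∀ n t, (Q n t).IsDiag) (hP : ∀ n t, (P n t).IsDiag)
    (hFd : ∀ n t, (Fd n t).IsDiag)
    (hUred : ∀ n t, Ublk Q P n t = -(D * (Ublk Q P n t)ᴴ * D))
    (hFred : ∀ n t, Fblk Fd n t = D * (Fblk Fd n t)ᴴ * D)
    (μ : ℤ → ℝ → ℂ → Matrix (Fin N ⊕ Fin N) (Fin N ⊕ Fin N) ℂ)
    (hS : ∀ (n : ℤ) (t : ℝ) (z : ℂ), z ≠ 0 →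
      Fblk Fd n t * μ (n + 1) t z =
        Zb N z * μ n t z * (Zb N z)⁻¹ + Ublk Q P n t * μ n t z * (Zb N z)⁻¹)
    (hT : ∀ (n : ℤ) (z : ℂ), z ≠ 0 → ∀ (t : ℝ) (i j : Fin N ⊕ Fin N),
      HasDerivAt (fun s => μ n s z i j)
        (((Complex.I * omega z) • (Sigma3b N * μ n t z - μ n t z * Sigma3b N)
          + Vblk Q P n t z * μ n t z) i j) t)
    (Φ : ℤ → ℝ → ℂ → Matrix (Fin N ⊕ Fin N) (Fin N ⊕ Fin N) ℂ)
    (hΦ : ∀ n t z, Φ n t z = D * (μ n t ((starRingEnd ℂ z)⁻¹))ᴴ * D) :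
    ∀ (n : ℤ) (t : ℝ) (z : ℂ), z ≠ 0 →
      (Φ (n + 1) t z * Fblk Fd n t =
        Zb N z * Φ n t z * (Zb N z)⁻¹ - Zb N z * Φ n t z * Ublk Q P n t) ∧
      (∀ i j : Fin N ⊕ Fin N,
        HasDerivAt (fun s => Φ n s z i j)
          (((Complex.I * omega z) • (Sigma3b N * Φ n t z - Φ n t z * Sigma3b N)
            - Φ n t z * Vblk Q P n t z) i j) t) :=
  stmt16_general N d₁ d₂ D hD hD2 Q P Fd hUred hFred μ hS hT Φ hΦ

end
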